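/- For each k ∈ {0,1,2,3} and every natural number p > 0, the Cayley–Dickson twist satisfies ω_k(p,p) = −1. -/

import Mathlib

/-- The five states of the Cayley–Dickson twist tree:
corner (C), top (T), left (L), diagonal (D) and interior (I). -/
inductive TwistState : Type
  | C | T | L | D | I
deriving DecidableEq

open TwistState

/-- The interior-node sign `i_k(a,b)` for the doubling product `P_k`, `k ∈ {0,1,2,3}`. -/
def iTwist (k : ℕ) (a b : Bool) : ℤ :=
  match k with
  | 0 => if a = false ∧ b = false then -1 else 1
  | 1 => -1
  | 2 => 1
  | _ => if a = false ∧ b = false then 1 else -1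

/-- One step of the twist-tree finite-state computation: from the current
(state, sign) pair, read a doublet of bits `(a, b)` and move to the new
(state, sign) pair. -/
def twistStep (k : ℕ) : TwistState × ℤ → Bool × Bool → TwistState × ℤ
  | (C, s), (false, false) => (C, s)
  | (C, s), (false, true)  => (T, s)
  | (C, s), (true, false)  => (L, s)
  | (C, s), (true, true)   => (D, -s)
  | (T, s), (false, false) => (T, s)
  | (T, s), (false, true)  => (T, s)
  | (T, s), (true, false)  => (I, s)
  | (T, s), (true, true)   => (I, -s)
  | (L, s), (false, false) => (L, s)
  | (L, s), (false, true)  => (I, -s)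
  | (L, s), (true, false)  => (L, s)
  | (L, s), (true, true)   => (I, s)
  | (D, s), (false, false) => (D, s)
  | (D, s), (false, true)  => (I, -s)
  | (D, s), (true, false)  => (I, s)
  | (D, s), (true, true)   => (D, s)
  | (I, s), (a, b)         => (I, s * iTwist k a b)

/-- The Cayley–Dickson twist `ω_k(p,q)` for the doubling product `P_k`:
write `p` and `q` in binary with a common number of bits (padding with
leading zeros), read the doublets of bits from most significant to least
significant, running the twist-tree automaton starting at state `C` with
sign `+1`; the result is the final sign. -/
def omegaTwist (k : ℕ) (p q : ℕ) : ℤ :=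
  (((List.range (max (Nat.size p) (Nat.size q))).reverse.map
      (fun i => (p.testBit i, q.testBit i))).foldl (twistStep k) (C, 1)).2

/-!
The top bit of `p` is set, so the first doublet of `(p, p)` is `(1,1)`, which moves the automaton
from `C` to `D` and flips the sign to `-1`. All further doublets are of the form `(a,a)`, and in
state `D` these leave both the state and the sign unchanged.
-/

theorem Nat.size_eq_log2_succ {n : ℕ} (hn : n ≠ 0) : n.size = n.log2 + 1 :=
  le_antisymm (Nat.size_le.2 Nat.lt_log2_self) (Nat.lt_size.2 (Nat.log2_self_le hn))

theorem twistStep_D_diag (k : ℕ) (s : ℤ) (a : Bool) : twistStep k (D, s) (a, a) = (D, s) := by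
  cases a <;> rfl

theorem foldl_twistStep_D_diag {α : Type*} (k : ℕ) (s : ℤ) (f : α → Bool) (l : List α) :
    (l.map fun i => (f i, f i)).foldl (twistStep k) (D, s) = (D, s) := by
  induction l with
  | nil => rfl
  | cons i l ih => simp only [List.map_cons, List.foldl_cons, twistStep_D_diag, ih]

/-- For each `k ∈ {0,1,2,3}` and every natural number `p > 0`, the
Cayley–Dickson twist satisfies `ω_k(p,p) = -1`. -/
theorem omegaTwist_self :
    ∀ k ∈ ({0, 1, 2, 3} : Finset ℕ), ∀ p : ℕ, 0 < p →
      omegaTwist k p p = -1 := by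
  intro k _ p hp
  have hsize : p.size = p.log2 + 1 := Nat.size_eq_log2_succ hp.ne'
  have hstart : twistStep k (C, 1) (true, true) = (D, -1) := rfl
  rw [omegaTwist, max_self, hsize, List.range_succ, List.reverse_append, List.reverse_singleton,
    List.singleton_append, List.map_cons, List.foldl_cons, Nat.testBit_log2 hp.ne', hstart,
    foldl_twistStep_D_diag]
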